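/- Let τ_1 : S_{n_1}(ℂ) → S_{n_1}(ℂ) and τ_2 : S_{n_2}(ℂ) → S_{n_2}(ℂ) be bi-quantum channels. Then the tensor product channel τ_1 ⊗ τ_2 is a bi-quantum channel, and σ_2(τ_1 ⊗ τ_2) = max(σ_2(τ_1), σ_2(τ_2)). -/

import Mathlib

open scoped ComplexOrder
open Matrix Kronecker

/-- Frobenius norm of a complex matrix: `√(tr (X Xᴴ))`. -/
noncomputable def frobNorm {n m : Type*} [Fintype n] [Fintype m]
    (X : Matrix n m ℂ) : ℝ :=
  Real.sqrt ((X * Xᴴ).trace.re)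

/-- Operator norm `σ₁(τ) = ‖τ‖` of a map between spaces of Hermitian matrices,
with respect to the Frobenius norm. -/
noncomputable def opNorm {n m : Type*} [Fintype n] [Fintype m]
    (τ : Matrix n n ℂ → Matrix m m ℂ) : ℝ :=
  sSup {c : ℝ | ∃ X : Matrix n n ℂ, X.IsHermitian ∧ frobNorm X ≤ 1 ∧ c = frobNorm (τ X)}

/-- The second singular value of a map between spaces of Hermitian matrices, via the
Courant–Fischer min-max characterization: the infimum over nonzero Hermitian `U` of the
norm of `τ` restricted to the orthogonal complement of `U`. -/
noncomputable def sigma2 {n m : Type*} [Fintype n] [Fintype m]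
    (τ : Matrix n n ℂ → Matrix m m ℂ) : ℝ :=
  sInf {c : ℝ | ∃ U : Matrix n n ℂ, U.IsHermitian ∧ U ≠ 0 ∧
    c = sSup {d : ℝ | ∃ X : Matrix n n ℂ, X.IsHermitian ∧ frobNorm X ≤ 1 ∧
      (U * X).trace.re = 0 ∧ d = frobNorm (τ X)}}

/-- Largest eigenvalue `λ₁` of a Hermitian matrix (junk value `0` otherwise). -/
noncomputable def lambdaMax {n : Type*} [Fintype n] [DecidableEq n]
    (Y : Matrix n n ℂ) : ℝ :=
  if hY : Y.IsHermitian then ⨆ i, hY.eigenvalues i else 0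

/-- von Neumann entropy `H(Y) = -∑ λᵢ log λᵢ` of a Hermitian matrix
(junk value `0` otherwise); note `Real.log 0 = 0`. -/
noncomputable def entropy {n : Type*} [Fintype n] [DecidableEq n]
    (Y : Matrix n n ℂ) : ℝ :=
  if hY : Y.IsHermitian then -∑ i, hY.eigenvalues i * Real.log (hY.eigenvalues i) else 0

/-- Minimum output entropy of a channel: the infimum of `H(τ X)` over density matrices `X`. -/
noncomputable def minEntropy {n m : Type*} [Fintype n] [DecidableEq n] [Fintype m] [DecidableEq m]
    (τ : Matrix n n ℂ → Matrix m m ℂ) : ℝ :=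
  sInf {h : ℝ | ∃ X : Matrix n n ℂ, X.PosSemidef ∧ X.trace = 1 ∧ h = entropy (τ X)}

/-- Eigenvalues of a Hermitian matrix arranged in decreasing order:
`eigsDesc Y 0 = λ₁ ≥ eigsDesc Y 1 = λ₂ ≥ …` (junk value `0` if not Hermitian). -/
noncomputable def eigsDesc {n : ℕ} (Y : Matrix (Fin n) (Fin n) ℂ) : Fin n → ℝ :=
  if hY : Y.IsHermitian then fun i => hY.eigenvalues (Tuple.sort hY.eigenvalues i.rev)
  else fun _ => 0

/-- The sum `λ₁ + ⋯ + λ_k` of the `k` largest eigenvalues of a Hermitian matrix. -/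
noncomputable def sumTopEigs {n : ℕ} (k : ℕ) (Y : Matrix (Fin n) (Fin n) ℂ) : ℝ :=
  ∑ i : Fin n, if (i : ℕ) < k then eigsDesc Y i else 0


/-!
For a bi-quantum channel `τ` the identity is fixed and its orthogonal complement, the traceless
matrices, is mapped into itself by a contraction. Hence the min-max defining `σ₂(τ)` is attained
at `U = 1`: `σ₂(τ)` is the norm of `τ` on traceless Hermitian matrices.

For `τ₁ ⊗ τ₂`, write a traceless Hermitian `Y` as `X ⊗ 1 + Q` with `X` traceless and `Q` in the
kernel of the partial trace over the second factor. Both summands and their images are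
orthogonal; `(τ₁ ⊗ τ₂)(X ⊗ 1) = τ₁ X ⊗ 1` is controlled by `σ₂(τ₁)`, and
`τ₁ ⊗ τ₂ = (τ₁ ⊗ id) ∘ (id ⊗ τ₂)` where `id ⊗ τ₂` acts on the traceless blocks of `Q` and
`τ₁ ⊗ id` is a contraction, so `Q` is controlled by `σ₂(τ₂)`. The embeddings `X ↦ X ⊗ 1` and
`X ↦ 1 ⊗ X` give the reverse inequality.
-/

open scoped InnerProductSpace

section Frobenius

variable {n m : Type*} [Fintype n] [Fintype m]

/-- Identifies `frobNorm` with a Euclidean norm, giving access to inner product space facts. -/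
noncomputable def frobVec : Matrix n m ℂ →ₗ[ℂ] EuclideanSpace ℂ (n × m) where
  toFun X := WithLp.toLp 2 fun p => X p.1 p.2
  map_add' _ _ := rfl
  map_smul' _ _ := rfl

omit [Fintype n] [Fintype m] in
lemma frobVec_injective : Function.Injective (frobVec : Matrix n m ℂ → _) := fun X Y h => by
  ext i j
  exact congrArg (fun v : EuclideanSpace ℂ (n × m) => v (i, j)) h

lemma inner_frobVec (X Y : Matrix n m ℂ) : ⟪frobVec X, frobVec Y⟫_ℂ = (Xᴴ * Y).trace := by
  simp only [frobVec, PiLp.inner_apply, RCLike.inner_apply,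
    Matrix.trace, Matrix.diag_apply, Matrix.mul_apply, Matrix.conjTranspose_apply,
    Fintype.sum_prod_type, starRingEnd_apply]
  rw [Finset.sum_comm]
  exact Finset.sum_congr rfl fun _ _ => Finset.sum_congr rfl fun _ _ => mul_comm _ _

lemma frobNorm_eq_norm_frobVec (X : Matrix n m ℂ) : frobNorm X = ‖frobVec X‖ := by
  rw [frobNorm, Matrix.trace_mul_comm, ← inner_frobVec,
    show (⟪frobVec X, frobVec X⟫_ℂ).re = ‖frobVec X‖ ^ 2 from inner_self_eq_norm_sq (𝕜 := ℂ) _,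
    Real.sqrt_sq (norm_nonneg _)]

lemma frobNorm_nonneg (X : Matrix n m ℂ) : 0 ≤ frobNorm X :=
  Real.sqrt_nonneg _

lemma frobNorm_zero : frobNorm (0 : Matrix n m ℂ) = 0 := by
  simp [frobNorm]

lemma frobNorm_sq (X : Matrix n m ℂ) : frobNorm X ^ 2 = (X * Xᴴ).trace.re := by
  rw [frobNorm, Real.sq_sqrt]
  rw [Matrix.trace_mul_comm, ← inner_frobVec]
  exact inner_self_nonneg (𝕜 := ℂ)

lemma frobNorm_pos {X : Matrix n m ℂ} (hX : X ≠ 0) : 0 < frobNorm X := by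
  rw [frobNorm_eq_norm_frobVec, norm_pos_iff]
  exact fun h => hX (frobVec_injective (h.trans (map_zero frobVec).symm))

lemma frobNorm_smul (c : ℂ) (X : Matrix n m ℂ) : frobNorm (c • X) = ‖c‖ * frobNorm X := by
  rw [frobNorm_eq_norm_frobVec, frobNorm_eq_norm_frobVec, map_smul, norm_smul]

lemma frobNorm_real_smul (r : ℝ) (X : Matrix n m ℂ) : frobNorm (r • X) = |r| * frobNorm X := by
  rw [← Complex.coe_smul, frobNorm_smul, Complex.norm_real, Real.norm_eq_abs]

lemma frobNorm_sq_eq_sum (X : Matrix n m ℂ) : frobNorm X ^ 2 = ∑ i, ∑ j, ‖X i j‖ ^ 2 := by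
  rw [frobNorm_eq_norm_frobVec, EuclideanSpace.norm_eq, Real.sq_sqrt (by positivity),
    Fintype.sum_prod_type]
  rfl

lemma trace_mul_conjTranspose (X : Matrix n m ℂ) : (X * Xᴴ).trace = ((frobNorm X ^ 2 : ℝ) : ℂ) := by
  rw [Matrix.trace_mul_comm, ← inner_frobVec, inner_self_eq_norm_sq_to_K, frobNorm_eq_norm_frobVec]
  norm_cast

lemma re_trace_mul_conjTranspose_le (M N : Matrix n m ℂ) :
    (M * Nᴴ).trace.re ≤ frobNorm M * frobNorm N := by
  rw [Matrix.trace_mul_comm, ← inner_frobVec, frobNorm_eq_norm_frobVec, frobNorm_eq_norm_frobVec,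
    mul_comm]
  exact re_inner_le_norm (𝕜 := ℂ) _ _

lemma frobNorm_add_sq {X Y : Matrix n m ℂ} (h : (Xᴴ * Y).trace.re = 0) :
    frobNorm (X + Y) ^ 2 = frobNorm X ^ 2 + frobNorm Y ^ 2 := by
  rw [← inner_frobVec] at h
  simp only [frobNorm_eq_norm_frobVec, map_add]
  rw [norm_add_sq (𝕜 := ℂ), RCLike.re_to_complex, h, mul_zero, add_zero]

lemma frobNorm_add_I_smul_sq {H K : Matrix n n ℂ} (hH : H.IsHermitian) (hK : K.IsHermitian) :
    frobNorm (H + Complex.I • K) ^ 2 = frobNorm H ^ 2 + frobNorm K ^ 2 := by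
  have hreal : star (H * K).trace = (H * K).trace := by
    rw [← Matrix.trace_conjTranspose, Matrix.conjTranspose_mul, hH.eq, hK.eq,
      Matrix.trace_mul_comm]
  rw [frobNorm_add_sq, frobNorm_smul, Complex.norm_I, one_mul]
  rw [Matrix.mul_smul, Matrix.trace_smul, hH.eq, smul_eq_mul, Complex.I_mul_re,
    Complex.conj_eq_iff_im.mp hreal, neg_zero]

lemma frobNorm_mul_frobNorm_add_le {n m : Type*} [Fintype n] [Fintype m]
    {E X Y : Matrix n m ℂ} (hEX : (Eᴴ * X).trace.re = 0) (hEY : (Eᴴ * Y).trace.re = 0)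
    (hX : frobNorm X ≤ 1) (hY : frobNorm Y ≤ 1) (a b : ℝ) :
    frobNorm Y * frobNorm (a • E + b • X) ≤ frobNorm (a • E + b • Y) := by
  have horth {Z : Matrix n m ℂ} (h : (Eᴴ * Z).trace.re = 0) :
      ((a • E)ᴴ * (b • Z)).trace.re = 0 := by
    rw [Matrix.conjTranspose_smul, star_trivial, Matrix.smul_mul, Matrix.mul_smul,
      Matrix.trace_smul, Matrix.trace_smul, Complex.smul_re, Complex.smul_re, h, smul_zero,
      smul_zero]
  rw [← sq_le_sq₀ (by positivity [frobNorm_nonneg Y, frobNorm_nonneg (a • E + b • X)])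
    (frobNorm_nonneg _), mul_pow, frobNorm_add_sq (horth hEX), frobNorm_add_sq (horth hEY)]
  simp only [frobNorm_real_smul, mul_pow, sq_abs]
  have hY₂ : frobNorm Y ^ 2 ≤ 1 := by nlinarith [frobNorm_nonneg Y]
  have hX₂ : frobNorm X ^ 2 ≤ 1 := by nlinarith [frobNorm_nonneg X]
  nlinarith [mul_nonneg (mul_nonneg (sq_nonneg a) (sq_nonneg (frobNorm E))) (sub_nonneg.2 hY₂),
    mul_nonneg (mul_nonneg (sq_nonneg b) (sq_nonneg (frobNorm Y))) (sub_nonneg.2 hX₂)]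

end Frobenius

lemma Matrix.IsHermitian.trace_eq_zero_of_re {n : Type*} [Fintype n] {X : Matrix n n ℂ}
    (hX : X.IsHermitian) (h : X.trace.re = 0) : X.trace = 0 := by
  have hreal : star X.trace = X.trace := by rw [← Matrix.trace_conjTranspose, hX.eq]
  exact Complex.ext h (Complex.conj_eq_iff_im.mp hreal)

section Kraus

variable {n l : Type*} [Fintype n] [Fintype l]

noncomputable def krausMap (B : l → Matrix n n ℂ) : Matrix n n ℂ →ₗ[ℂ] Matrix n n ℂ where
  toFun X := ∑ i, B i * X * (B i)ᴴ
  map_add' X Y := by simp only [mul_add, add_mul, Finset.sum_add_distrib]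
  map_smul' c X := by simp only [Matrix.mul_smul, Matrix.smul_mul, Finset.smul_sum,
    RingHom.id_apply]

lemma krausMap_apply (B : l → Matrix n n ℂ) (X : Matrix n n ℂ) :
    krausMap B X = ∑ i, B i * X * (B i)ᴴ := rfl

/-- Kraus operators of a bi-quantum channel. -/
structure IsBiKraus [DecidableEq n] (B : l → Matrix n n ℂ) : Prop where
  sum_conjTranspose_mul : ∑ i, (B i)ᴴ * B i = 1
  sum_mul_conjTranspose : ∑ i, B i * (B i)ᴴ = 1

lemma isHermitian_krausMap (B : l → Matrix n n ℂ) {X : Matrix n n ℂ} (hX : X.IsHermitian) :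
    (krausMap B X).IsHermitian := by
  rw [Matrix.IsHermitian, krausMap_apply, Matrix.conjTranspose_sum]
  simp only [Matrix.conjTranspose_mul, Matrix.conjTranspose_conjTranspose, hX.eq, mul_assoc]

lemma trace_krausMap [DecidableEq n] {B : l → Matrix n n ℂ} (hB : ∑ i, (B i)ᴴ * B i = 1)
    (X : Matrix n n ℂ) : (krausMap B X).trace = X.trace := by
  rw [krausMap_apply, Matrix.trace_sum]
  simp_rw [Matrix.trace_mul_cycle (B _) X]
  rw [← Matrix.trace_sum, ← Finset.sum_mul, hB, one_mul]

lemma krausMap_one [DecidableEq n] {B : l → Matrix n n ℂ} (hB : ∑ i, B i * (B i)ᴴ = 1) :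
    krausMap B 1 = 1 := by
  simpa only [krausMap_apply, mul_one] using hB

lemma sum_frobNorm_mul_left_sq {κ m : Type*} [Fintype κ] [Fintype m] [DecidableEq n]
    {D : κ → Matrix n n ℂ} (hD : ∑ k, (D k)ᴴ * D k = 1) (X : Matrix n m ℂ) :
    ∑ k, frobNorm (D k * X) ^ 2 = frobNorm X ^ 2 := by
  have hterm (k : κ) : (D k * X * (D k * X)ᴴ).trace = ((D k)ᴴ * D k * (X * Xᴴ)).trace := by
    rw [Matrix.conjTranspose_mul, ← Matrix.mul_assoc, Matrix.trace_mul_comm]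
    simp only [Matrix.mul_assoc]
  simp only [frobNorm_sq, ← Complex.re_sum, ← Matrix.trace_sum]
  rw [Matrix.trace_sum, Finset.sum_congr rfl fun k _ => hterm k, ← Matrix.trace_sum,
    ← Matrix.sum_mul, hD, Matrix.one_mul]

lemma sum_frobNorm_mul_right_sq {κ m : Type*} [Fintype κ] [Fintype m] [DecidableEq n]
    {D : κ → Matrix n n ℂ} (hD : ∑ k, D k * (D k)ᴴ = 1) (X : Matrix m n ℂ) :
    ∑ k, frobNorm (X * D k) ^ 2 = frobNorm X ^ 2 := by
  have hterm (k : κ) : X * D k * (X * D k)ᴴ = X * (D k * (D k)ᴴ) * Xᴴ := by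
    simp only [Matrix.conjTranspose_mul, Matrix.mul_assoc]
  simp only [frobNorm_sq, ← Complex.re_sum, ← Matrix.trace_sum, hterm, ← Matrix.mul_sum,
    ← Matrix.sum_mul, hD, Matrix.mul_one]

/-- With `Eᵢⱼ = Bⱼᴴ Bᵢ`, `‖τ X‖² = ∑ Re tr((Eᵢⱼ X)(X Eᵢⱼ)ᴴ)`; by Cauchy–Schwarz and AM–GM this is at
most `(∑ ‖Eᵢⱼ X‖² + ∑ ‖X Eᵢⱼ‖²) / 2`, and both sums equal `‖X‖²` since
`∑ Eᵢⱼᴴ Eᵢⱼ = ∑ Eᵢⱼ Eᵢⱼᴴ = 1`. -/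
lemma frobNorm_krausMap_le [DecidableEq n] {B : l → Matrix n n ℂ} (hB : IsBiKraus B)
    (X : Matrix n n ℂ) : frobNorm (krausMap B X) ≤ frobNorm X := by
  set E : l × l → Matrix n n ℂ := fun p => (B p.2)ᴴ * B p.1
  have hE₁ : ∑ p, (E p)ᴴ * E p = 1 := by
    have h (p : l × l) : (E p)ᴴ * E p = (B p.1)ᴴ * (B p.2 * (B p.2)ᴴ) * B p.1 := by
      simp only [E, Matrix.conjTranspose_mul, Matrix.conjTranspose_conjTranspose, mul_assoc]
    simp only [h, Fintype.sum_prod_type, ← Finset.mul_sum, ← Finset.sum_mul,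
      hB.sum_mul_conjTranspose, mul_one, hB.sum_conjTranspose_mul]
  have hE₂ : ∑ p, E p * (E p)ᴴ = 1 := by
    have h (p : l × l) : E p * (E p)ᴴ = (B p.2)ᴴ * (B p.1 * (B p.1)ᴴ) * B p.2 := by
      simp only [E, Matrix.conjTranspose_mul, Matrix.conjTranspose_conjTranspose, mul_assoc]
    simp only [h, Fintype.sum_prod_type_right, ← Finset.mul_sum, ← Finset.sum_mul,
      hB.sum_mul_conjTranspose, mul_one, hB.sum_conjTranspose_mul]
  have hexpand : frobNorm (krausMap B X) ^ 2 = ∑ p, (E p * X * (X * E p)ᴴ).trace.re := by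
    have h (p : l × l) : (B p.1 * X * (B p.1)ᴴ * (B p.2 * X * (B p.2)ᴴ)ᴴ).trace
        = (E p * X * (X * E p)ᴴ).trace := by
      simp only [E, Matrix.conjTranspose_mul, Matrix.conjTranspose_conjTranspose, ← mul_assoc]
      rw [Matrix.trace_mul_comm]
      simp only [mul_assoc]
    rw [frobNorm_sq, krausMap_apply, Matrix.conjTranspose_sum, Finset.sum_mul_sum,
      ← Finset.sum_product', Matrix.trace_sum, Complex.re_sum]
    exact Finset.sum_congr rfl fun p _ => congrArg Complex.re (h p)
  rw [← sq_le_sq₀ (frobNorm_nonneg _) (frobNorm_nonneg _), hexpand]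
  calc ∑ p, (E p * X * (X * E p)ᴴ).trace.re
      ≤ ∑ p, frobNorm (E p * X) * frobNorm (X * E p) :=
        Finset.sum_le_sum fun p _ => re_trace_mul_conjTranspose_le _ _
    _ ≤ ∑ p, (frobNorm (E p * X) ^ 2 + frobNorm (X * E p) ^ 2) / 2 :=
        Finset.sum_le_sum fun p _ => by
          nlinarith [sq_nonneg (frobNorm (E p * X) - frobNorm (X * E p))]
    _ = frobNorm X ^ 2 := by
        rw [← Finset.sum_div, Finset.sum_add_distrib, sum_frobNorm_mul_left_sq hE₁,
          sum_frobNorm_mul_right_sq hE₂]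
        ring

end Kraus

section Orthogonal

variable {n m : Type*} [Fintype n] [Fintype m]

/-- `sigma2 τ` is the infimum of `normOnOrthogonal τ U` over Hermitian `U ≠ 0`. -/
noncomputable def normOnOrthogonal (τ : Matrix n n ℂ → Matrix m m ℂ) (U : Matrix n n ℂ) : ℝ :=
  sSup {d : ℝ | ∃ X : Matrix n n ℂ, X.IsHermitian ∧ frobNorm X ≤ 1 ∧
    (U * X).trace.re = 0 ∧ d = frobNorm (τ X)}

lemma le_normOnOrthogonal {τ : Matrix n n ℂ → Matrix m m ℂ}
    (hτ : ∀ X, frobNorm (τ X) ≤ frobNorm X) (U : Matrix n n ℂ) {X : Matrix n n ℂ}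
    (hX : X.IsHermitian) (hX₁ : frobNorm X ≤ 1) (hUX : (U * X).trace.re = 0) :
    frobNorm (τ X) ≤ normOnOrthogonal τ U :=
  le_csSup ⟨1, by rintro _ ⟨Y, -, hY₁, -, rfl⟩; exact (hτ Y).trans hY₁⟩ ⟨X, hX, hX₁, hUX, rfl⟩

lemma normOnOrthogonal_nonneg {τ : Matrix n n ℂ →ₗ[ℂ] Matrix m m ℂ}
    (hτ : ∀ X, frobNorm (τ X) ≤ frobNorm X) (U : Matrix n n ℂ) : 0 ≤ normOnOrthogonal τ U := by
  simpa [frobNorm_zero] using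
    le_normOnOrthogonal hτ U Matrix.isHermitian_zero (by simp [frobNorm_zero]) (by simp)

lemma frobNorm_apply_le_normOnOrthogonal_mul {τ : Matrix n n ℂ →ₗ[ℂ] Matrix m m ℂ}
    (hτ : ∀ X, frobNorm (τ X) ≤ frobNorm X) (U : Matrix n n ℂ) {X : Matrix n n ℂ}
    (hX : X.IsHermitian) (hUX : (U * X).trace.re = 0) :
    frobNorm (τ X) ≤ normOnOrthogonal τ U * frobNorm X := by
  rcases eq_or_ne X 0 with rfl | hX₀
  · simp [frobNorm_zero]
  have hpos := frobNorm_pos hX₀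
  have h := le_normOnOrthogonal hτ U (X := (frobNorm X)⁻¹ • X)
    (hX.smul (IsSelfAdjoint.all _))
    (by rw [frobNorm_real_smul, abs_of_pos (inv_pos.mpr hpos), inv_mul_cancel₀ hpos.ne'])
    (by rw [Matrix.mul_smul, Matrix.trace_smul, Complex.smul_re, hUX, smul_zero])
  rwa [LinearMap.map_smul_of_tower, frobNorm_real_smul, abs_of_pos (inv_pos.mpr hpos),
    inv_mul_le_iff₀ hpos, mul_comm] at h

end Orthogonal

lemma normOnOrthogonal_one_le_of_intertwine {n N : Type*} [Fintype n] [DecidableEq n]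
    [Fintype N] [DecidableEq N] (τ₁ : Matrix n n ℂ → Matrix n n ℂ)
    {τ : Matrix N N ℂ →ₗ[ℂ] Matrix N N ℂ} (hτ : ∀ X, frobNorm (τ X) ≤ frobNorm X)
    (φ : Matrix n n ℂ → Matrix N N ℂ) {c : ℝ} (hc : 0 < c)
    (hφ : ∀ X, frobNorm (φ X) = c * frobNorm X) (hφH : ∀ X, X.IsHermitian → (φ X).IsHermitian)
    (hφtr : ∀ X, X.trace = 0 → (φ X).trace = 0) (hτφ : ∀ X, τ (φ X) = φ (τ₁ X)) :
    normOnOrthogonal τ₁ 1 ≤ normOnOrthogonal τ 1 := by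
  have hS := normOnOrthogonal_nonneg hτ 1
  refine csSup_le ⟨_, 0, Matrix.isHermitian_zero, by simp [frobNorm_zero], by simp, rfl⟩ ?_
  rintro _ ⟨X, hX, hX₁, hX₀, rfl⟩
  rw [Matrix.one_mul] at hX₀
  have h := frobNorm_apply_le_normOnOrthogonal_mul hτ 1 (hφH X hX)
    (by rw [Matrix.one_mul, hφtr X (hX.trace_eq_zero_of_re hX₀), Complex.zero_re])
  rw [hτφ, hφ, hφ, mul_left_comm] at h
  exact (le_of_mul_le_mul_left h hc).trans (mul_le_of_le_one_right hS hX₁)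

section BiKraus

open scoped ComplexStarModule

variable {n l : Type*} [Fintype n] [DecidableEq n] [Fintype l] {B : l → Matrix n n ℂ}

/-- Given `X ⊥ 1`, the matrix `-⟨U, X⟩ 1 + ⟨U, 1⟩ X` is orthogonal to `U`, and `τ` shrinks it
relatively less than `X` because `τ` fixes `1` and maps `X` into `1⊥`. -/
lemma normOnOrthogonal_one_le (hB : IsBiKraus B) (U : Matrix n n ℂ) :
    normOnOrthogonal (krausMap B) 1 ≤ normOnOrthogonal (krausMap B) U := by
  have hτ := frobNorm_krausMap_le hB
  refine csSup_le ⟨0, 0, Matrix.isHermitian_zero, by simp [frobNorm_zero], by simp,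
    by simp [frobNorm_zero]⟩ ?_
  rintro _ ⟨X, hX, hX₁, hX₀, rfl⟩
  rw [Matrix.one_mul] at hX₀
  set β := (U * X).trace.re
  by_cases hβ : β = 0
  · exact le_normOnOrthogonal hτ U hX hX₁ hβ
  have hne : Nonempty n := by
    by_contra h
    exact hβ (by simp [β, Matrix.trace, not_nonempty_iff.mp h])
  set Z : Matrix n n ℂ := (-β) • 1 + U.trace.re • X
  have hZ : Z.IsHermitian :=
    (Matrix.isHermitian_one.smul (IsSelfAdjoint.all _)).add (hX.smul (IsSelfAdjoint.all _))
  have hUZ : (U * Z).trace.re = 0 := by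
    simp only [Z, Matrix.mul_add, Matrix.mul_smul, Matrix.mul_one, Matrix.trace_add,
      Matrix.trace_smul, Complex.add_re, Complex.smul_re, smul_eq_mul]
    ring
  have hZ₀ : 0 < frobNorm Z := by
    refine frobNorm_pos fun h => hβ ?_
    have htr := congrArg Matrix.trace h
    simp only [Z, Matrix.trace_add, Matrix.trace_smul, Matrix.trace_one,
      hX.trace_eq_zero_of_re hX₀, smul_zero, add_zero, Matrix.trace_zero] at htr
    simpa [Fintype.card_ne_zero] using htr
  have hτZ : krausMap B Z = (-β) • 1 + U.trace.re • krausMap B X := by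
    simp only [Z, map_add, LinearMap.map_smul_of_tower, krausMap_one hB.sum_mul_conjTranspose]
  have hgrow : frobNorm (krausMap B X) * frobNorm Z ≤ frobNorm (krausMap B Z) := by
    rw [hτZ]
    refine frobNorm_mul_frobNorm_add_le ?_ ?_ hX₁ ((hτ X).trans hX₁) _ _
    · rwa [Matrix.conjTranspose_one, Matrix.one_mul]
    · rwa [Matrix.conjTranspose_one, Matrix.one_mul,
        trace_krausMap hB.sum_conjTranspose_mul]
  exact le_of_mul_le_mul_right
    (hgrow.trans (frobNorm_apply_le_normOnOrthogonal_mul hτ U hZ hUZ)) hZ₀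

lemma sigma2_krausMap [Nonempty n] (hB : IsBiKraus B) :
    sigma2 (krausMap B) = normOnOrthogonal (krausMap B) 1 := by
  have hmem : normOnOrthogonal (krausMap B) 1 ∈
      {c | ∃ U : Matrix n n ℂ, U.IsHermitian ∧ U ≠ 0 ∧ c = normOnOrthogonal (krausMap B) U} :=
    ⟨1, Matrix.isHermitian_one, one_ne_zero, rfl⟩
  refine le_antisymm (csInf_le ⟨0, ?_⟩ hmem) (le_csInf ⟨_, hmem⟩ ?_)
  · rintro _ ⟨U, -, -, rfl⟩
    exact normOnOrthogonal_nonneg (frobNorm_krausMap_le hB) U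
  · rintro _ ⟨U, -, -, rfl⟩
    exact normOnOrthogonal_one_le hB U

/-- Splitting `M = ℜ M + i ℑ M` extends the bound from Hermitian to all traceless matrices. -/
lemma frobNorm_krausMap_le_of_trace_eq_zero (hB : IsBiKraus B) {M : Matrix n n ℂ}
    (hM : M.trace = 0) :
    frobNorm (krausMap B M) ≤ normOnOrthogonal (krausMap B) 1 * frobNorm M := by
  set S := normOnOrthogonal (krausMap B) 1
  have hS := normOnOrthogonal_nonneg (frobNorm_krausMap_le hB) 1
  have hbound {H : Matrix n n ℂ} (hH : IsSelfAdjoint H) (htr : H.trace = 0) :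
      frobNorm (krausMap B H) ≤ S * frobNorm H :=
    frobNorm_apply_le_normOnOrthogonal_mul (frobNorm_krausMap_le hB) 1 hH
      (by rw [Matrix.one_mul, htr, Complex.zero_re])
  have htrace_re : (ℜ M : Matrix n n ℂ).trace = 0 := by
    rw [realPart_apply_coe, Matrix.trace_smul, Matrix.trace_add, Matrix.star_eq_conjTranspose,
      Matrix.trace_conjTranspose, hM, star_zero, add_zero, smul_zero]
  have htrace_im : (ℑ M : Matrix n n ℂ).trace = 0 := by
    rw [imaginaryPart_apply_coe, Matrix.trace_smul, Matrix.trace_smul, Matrix.trace_sub,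
      Matrix.star_eq_conjTranspose, Matrix.trace_conjTranspose, hM, star_zero, sub_zero,
      smul_zero, smul_zero]
  have hH := hbound (ℜ M).2 htrace_re
  have hK := hbound (ℑ M).2 htrace_im
  have hdecomp := realPart_add_I_smul_imaginaryPart M
  have hM₂ := frobNorm_add_I_smul_sq (ℜ M).2 (ℑ M).2
  have hτM₂ := frobNorm_add_I_smul_sq (isHermitian_krausMap B (ℜ M).2)
    (isHermitian_krausMap B (ℑ M).2)
  rw [← map_smul, ← map_add, hdecomp] at hτM₂
  rw [hdecomp] at hM₂
  rw [← sq_le_sq₀ (frobNorm_nonneg _) (mul_nonneg hS (frobNorm_nonneg _)), mul_pow, hτM₂, hM₂]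
  nlinarith [mul_le_mul hH hH (frobNorm_nonneg _) (mul_nonneg hS (frobNorm_nonneg _)),
    mul_le_mul hK hK (frobNorm_nonneg _) (mul_nonneg hS (frobNorm_nonneg _))]

end BiKraus

section Kronecker

variable {R : Type*} [CommSemiring R]

lemma Matrix.sum_kronecker {ι a b c d : Type*} [Fintype ι] (f : ι → Matrix a b R)
    (B : Matrix c d R) : ∑ i, f i ⊗ₖ B = (∑ i, f i) ⊗ₖ B := by
  ext
  simp [Matrix.sum_apply, Finset.sum_mul]

lemma Matrix.kronecker_sum {ι a b c d : Type*} [Fintype ι] (A : Matrix a b R)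
    (g : ι → Matrix c d R) : ∑ i, A ⊗ₖ g i = A ⊗ₖ ∑ i, g i := by
  ext
  simp [Matrix.sum_apply, Finset.mul_sum]

lemma Matrix.sum_kronecker_sum {ι κ a b c d : Type*} [Fintype ι] [Fintype κ]
    (f : ι → Matrix a b R) (g : κ → Matrix c d R) :
    ∑ p : ι × κ, f p.1 ⊗ₖ g p.2 = (∑ i, f i) ⊗ₖ ∑ j, g j := by
  simp only [Fintype.sum_prod_type, Matrix.kronecker_sum, Matrix.sum_kronecker]

end Kronecker

section PartialTrace

variable {R : Type*} [CommSemiring R] {n₁ n₂ : Type*}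

def Matrix.blocks : Matrix (n₁ × n₂) (n₁ × n₂) R →ₗ[R] Matrix n₁ n₁ (Matrix n₂ n₂ R) :=
  (Matrix.compLinearEquiv n₁ n₁ n₂ n₂ R R).symm.toLinearMap

/-- The partial trace over the second tensor factor. -/
def Matrix.traceRight [Fintype n₂] : Matrix (n₁ × n₂) (n₁ × n₂) R →ₗ[R] Matrix n₁ n₁ R :=
  (Matrix.traceLinearMap n₂ R R).mapMatrix ∘ₗ Matrix.blocks

lemma Matrix.blocks_apply (Y : Matrix (n₁ × n₂) (n₁ × n₂) R) (a b : n₁) (i j : n₂) :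
    Matrix.blocks Y a b i j = Y (a, i) (b, j) := rfl

variable [Fintype n₂]

lemma Matrix.traceRight_apply (Y : Matrix (n₁ × n₂) (n₁ × n₂) R) (a b : n₁) :
    Matrix.traceRight Y a b = (Matrix.blocks Y a b).trace := rfl

lemma Matrix.traceRight_kronecker (A : Matrix n₁ n₁ R) (B : Matrix n₂ n₂ R) :
    Matrix.traceRight (A ⊗ₖ B) = B.trace • A := by
  ext a b
  simp [Matrix.traceRight_apply, Matrix.trace, Matrix.blocks_apply, ← Finset.mul_sum, mul_comm]

lemma Matrix.trace_traceRight [Fintype n₁] (Y : Matrix (n₁ × n₂) (n₁ × n₂) R) :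
    (Matrix.traceRight Y).trace = Y.trace := by
  simp [Matrix.trace, Matrix.traceRight_apply, Matrix.blocks_apply, Fintype.sum_prod_type]

lemma Matrix.trace_kronecker_one_mul [Fintype n₁] [DecidableEq n₂] (A : Matrix n₁ n₁ R)
    (Y : Matrix (n₁ × n₂) (n₁ × n₂) R) :
    ((A ⊗ₖ (1 : Matrix n₂ n₂ R)) * Y).trace = (A * Matrix.traceRight Y).trace := by
  simp only [Matrix.trace, Matrix.diag_apply, Matrix.mul_apply, Matrix.kroneckerMap_apply,
    Matrix.one_apply, Matrix.traceRight_apply, Matrix.blocks_apply, Fintype.sum_prod_type,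
    ite_mul, zero_mul, mul_ite, mul_zero, mul_one, Finset.sum_ite_eq, Finset.mem_univ, if_true,
    Finset.mul_sum]
  exact Finset.sum_congr rfl fun _ _ => Finset.sum_comm

variable [StarRing R]

lemma Matrix.IsHermitian.traceRight {Y : Matrix (n₁ × n₂) (n₁ × n₂) R} (hY : Y.IsHermitian) :
    (Matrix.traceRight Y).IsHermitian := by
  ext a b
  simp only [Matrix.conjTranspose_apply, Matrix.traceRight_apply, Matrix.trace,
    Matrix.diag_apply, Matrix.blocks_apply, star_sum]
  exact Finset.sum_congr rfl fun j _ => congrFun (congrFun hY (a, j)) (b, j)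

lemma Matrix.blocks_one_kronecker_conj [Fintype n₁] [DecidableEq n₁] (C : Matrix n₂ n₂ R)
    (Y : Matrix (n₁ × n₂) (n₁ × n₂) R) (a b : n₁) :
    Matrix.blocks ((1 ⊗ₖ C) * Y * (1 ⊗ₖ C)ᴴ) a b = C * Matrix.blocks Y a b * Cᴴ := by
  rw [Matrix.conjTranspose_kronecker, Matrix.conjTranspose_one]
  ext k l
  simp only [Matrix.blocks_apply, Matrix.mul_apply, Matrix.kroneckerMap_apply,
    Matrix.one_apply, Fintype.sum_prod_type, ite_mul, zero_mul, mul_ite, mul_zero,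
    Finset.sum_ite_irrel, Finset.sum_const_zero, Finset.sum_ite_eq, Finset.sum_ite_eq',
    Finset.mem_univ, if_true, one_mul]

lemma Matrix.traceRight_kronecker_one_conj [Fintype n₁] [DecidableEq n₂] (B : Matrix n₁ n₁ R)
    (Y : Matrix (n₁ × n₂) (n₁ × n₂) R) :
    Matrix.traceRight ((B ⊗ₖ 1) * Y * (B ⊗ₖ 1)ᴴ) = B * Matrix.traceRight Y * Bᴴ := by
  rw [Matrix.conjTranspose_kronecker, Matrix.conjTranspose_one]
  ext a b
  simp only [Matrix.traceRight_apply, Matrix.trace, Matrix.diag_apply, Matrix.blocks_apply,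
    Matrix.mul_apply, Matrix.kroneckerMap_apply, Matrix.one_apply, Fintype.sum_prod_type,
    ite_mul, zero_mul, mul_ite, mul_zero, Finset.sum_ite_eq, Finset.sum_ite_eq',
    Finset.mem_univ, if_true, Finset.sum_mul, Finset.mul_sum, mul_one]
  rw [Finset.sum_comm]
  exact Finset.sum_congr rfl fun _ _ => Finset.sum_comm

end PartialTrace

section TensorChannel

variable {n₁ n₂ l₁ l₂ : Type*} [Fintype n₁] [Fintype n₂] [Fintype l₁] [Fintype l₂]

lemma frobNorm_kronecker {a b c d : Type*} [Fintype a] [Fintype b] [Fintype c] [Fintype d]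
    (A : Matrix a b ℂ) (B : Matrix c d ℂ) : frobNorm (A ⊗ₖ B) = frobNorm A * frobNorm B := by
  rw [frobNorm, Matrix.conjTranspose_kronecker, ← Matrix.mul_kronecker_mul,
    Matrix.trace_kronecker, trace_mul_conjTranspose, trace_mul_conjTranspose,
    ← Complex.ofReal_mul, Complex.ofReal_re, Real.sqrt_mul (sq_nonneg _),
    Real.sqrt_sq (frobNorm_nonneg _), Real.sqrt_sq (frobNorm_nonneg _)]

lemma frobNorm_sq_eq_sum_blocks (Y : Matrix (n₁ × n₂) (n₁ × n₂) ℂ) :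
    frobNorm Y ^ 2 = ∑ a, ∑ b, frobNorm (Matrix.blocks Y a b) ^ 2 := by
  simp only [frobNorm_sq_eq_sum, Matrix.blocks_apply, Fintype.sum_prod_type]
  exact Finset.sum_congr rfl fun _ _ => Finset.sum_comm

lemma krausMap_kronecker (A₁ : l₁ → Matrix n₁ n₁ ℂ) (A₂ : l₂ → Matrix n₂ n₂ ℂ)
    (M : Matrix n₁ n₁ ℂ) (N : Matrix n₂ n₂ ℂ) :
    krausMap (fun p : l₁ × l₂ => A₁ p.1 ⊗ₖ A₂ p.2) (M ⊗ₖ N) =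
      krausMap A₁ M ⊗ₖ krausMap A₂ N := by
  simp only [krausMap_apply, Matrix.conjTranspose_kronecker, ← Matrix.mul_kronecker_mul]
  exact Matrix.sum_kronecker_sum (fun i => A₁ i * M * (A₁ i)ᴴ) fun j => A₂ j * N * (A₂ j)ᴴ

variable [DecidableEq n₁] [DecidableEq n₂]

lemma IsBiKraus.kronecker {A₁ : l₁ → Matrix n₁ n₁ ℂ} {A₂ : l₂ → Matrix n₂ n₂ ℂ}
    (h₁ : IsBiKraus A₁) (h₂ : IsBiKraus A₂) :
    IsBiKraus (fun p : l₁ × l₂ => A₁ p.1 ⊗ₖ A₂ p.2) where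
  sum_conjTranspose_mul := by
    simp only [Matrix.conjTranspose_kronecker, ← Matrix.mul_kronecker_mul]
    rw [Matrix.sum_kronecker_sum (fun i => (A₁ i)ᴴ * A₁ i) fun j => (A₂ j)ᴴ * A₂ j,
      h₁.sum_conjTranspose_mul, h₂.sum_conjTranspose_mul, Matrix.one_kronecker_one]
  sum_mul_conjTranspose := by
    simp only [Matrix.conjTranspose_kronecker, ← Matrix.mul_kronecker_mul]
    rw [Matrix.sum_kronecker_sum (fun i => A₁ i * (A₁ i)ᴴ) fun j => A₂ j * (A₂ j)ᴴ,
      h₁.sum_mul_conjTranspose, h₂.sum_mul_conjTranspose, Matrix.one_kronecker_one]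

lemma IsBiKraus.kronecker_one {A₁ : l₁ → Matrix n₁ n₁ ℂ} (h₁ : IsBiKraus A₁) :
    IsBiKraus (fun i => A₁ i ⊗ₖ (1 : Matrix n₂ n₂ ℂ)) where
  sum_conjTranspose_mul := by
    simp only [Matrix.conjTranspose_kronecker, Matrix.conjTranspose_one,
      ← Matrix.mul_kronecker_mul, Matrix.mul_one, Matrix.sum_kronecker,
      h₁.sum_conjTranspose_mul, Matrix.one_kronecker_one]
  sum_mul_conjTranspose := by
    simp only [Matrix.conjTranspose_kronecker, Matrix.conjTranspose_one,
      ← Matrix.mul_kronecker_mul, Matrix.mul_one, Matrix.sum_kronecker,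
      h₁.sum_mul_conjTranspose, Matrix.one_kronecker_one]

lemma krausMap_kronecker_eq_comp (A₁ : l₁ → Matrix n₁ n₁ ℂ) (A₂ : l₂ → Matrix n₂ n₂ ℂ)
    (Y : Matrix (n₁ × n₂) (n₁ × n₂) ℂ) :
    krausMap (fun p : l₁ × l₂ => A₁ p.1 ⊗ₖ A₂ p.2) Y =
      krausMap (fun i => A₁ i ⊗ₖ (1 : Matrix n₂ n₂ ℂ))
        (krausMap (fun j => (1 : Matrix n₁ n₁ ℂ) ⊗ₖ A₂ j) Y) := by
  have hfac (i : l₁) (j : l₂) : A₁ i ⊗ₖ A₂ j = (A₁ i ⊗ₖ 1) * (1 ⊗ₖ A₂ j) := by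
    rw [← Matrix.mul_kronecker_mul, Matrix.mul_one, Matrix.one_mul]
  simp only [krausMap_apply, Fintype.sum_prod_type, Finset.mul_sum, Finset.sum_mul, hfac,
    Matrix.conjTranspose_mul, mul_assoc]

omit [DecidableEq n₂] in
lemma blocks_krausMap_one_kronecker (A₂ : l₂ → Matrix n₂ n₂ ℂ) (Y : Matrix (n₁ × n₂) (n₁ × n₂) ℂ)
    (a b : n₁) :
    Matrix.blocks (krausMap (fun j => (1 : Matrix n₁ n₁ ℂ) ⊗ₖ A₂ j) Y) a b =
      krausMap A₂ (Matrix.blocks Y a b) := by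
  simp only [krausMap_apply, map_sum, Matrix.sum_apply, Matrix.blocks_one_kronecker_conj]

omit [DecidableEq n₁] in
lemma traceRight_krausMap_kronecker_one (A₁ : l₁ → Matrix n₁ n₁ ℂ)
    (Y : Matrix (n₁ × n₂) (n₁ × n₂) ℂ) :
    Matrix.traceRight (krausMap (fun i => A₁ i ⊗ₖ (1 : Matrix n₂ n₂ ℂ)) Y) =
      krausMap A₁ (Matrix.traceRight Y) := by
  simp only [krausMap_apply, map_sum, Matrix.traceRight_kronecker_one_conj]

lemma traceRight_krausMap_kronecker (A₁ : l₁ → Matrix n₁ n₁ ℂ) {A₂ : l₂ → Matrix n₂ n₂ ℂ}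
    (hA₂ : ∑ j, (A₂ j)ᴴ * A₂ j = 1) (Y : Matrix (n₁ × n₂) (n₁ × n₂) ℂ) :
    Matrix.traceRight (krausMap (fun p : l₁ × l₂ => A₁ p.1 ⊗ₖ A₂ p.2) Y) =
      krausMap A₁ (Matrix.traceRight Y) := by
  have hinner : Matrix.traceRight (krausMap (fun j => (1 : Matrix n₁ n₁ ℂ) ⊗ₖ A₂ j) Y) =
      Matrix.traceRight Y := by
    ext a b
    rw [Matrix.traceRight_apply, blocks_krausMap_one_kronecker, trace_krausMap hA₂,
      Matrix.traceRight_apply]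
  rw [krausMap_kronecker_eq_comp, traceRight_krausMap_kronecker_one, hinner]

end TensorChannel

section TensorBounds

variable {n₁ n₂ l₁ l₂ : Type*} [Fintype n₁] [Fintype n₂] [Fintype l₁] [Fintype l₂]
  [DecidableEq n₁] [DecidableEq n₂] {A₁ : l₁ → Matrix n₁ n₁ ℂ} {A₂ : l₂ → Matrix n₂ n₂ ℂ}

omit [DecidableEq n₁] in
lemma frobNorm_kronecker_one_add_sq (X : Matrix n₁ n₁ ℂ) {W : Matrix (n₁ × n₂) (n₁ × n₂) ℂ}
    (hW : Matrix.traceRight W = 0) :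
    frobNorm (X ⊗ₖ (1 : Matrix n₂ n₂ ℂ) + W) ^ 2 =
      frobNorm (X ⊗ₖ (1 : Matrix n₂ n₂ ℂ)) ^ 2 + frobNorm W ^ 2 := by
  refine frobNorm_add_sq ?_
  rw [Matrix.conjTranspose_kronecker, Matrix.conjTranspose_one, Matrix.trace_kronecker_one_mul,
    hW, Matrix.mul_zero, Matrix.trace_zero, Complex.zero_re]

omit [DecidableEq n₁] in
lemma exists_eq_kronecker_one_add [Nonempty n₂] {Y : Matrix (n₁ × n₂) (n₁ × n₂) ℂ}
    (hY : Y.IsHermitian) (hY₀ : Y.trace = 0) :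
    ∃ X Q, X.IsHermitian ∧ X.trace = 0 ∧ Q.IsHermitian ∧ Matrix.traceRight Q = 0 ∧
      Y = X ⊗ₖ (1 : Matrix n₂ n₂ ℂ) + Q := by
  set X := (Fintype.card n₂ : ℝ)⁻¹ • Matrix.traceRight Y
  have hX : X.IsHermitian := hY.traceRight.smul (IsSelfAdjoint.all _)
  have hP : (X ⊗ₖ (1 : Matrix n₂ n₂ ℂ)).IsHermitian := by
    rw [Matrix.IsHermitian, Matrix.conjTranspose_kronecker, hX.eq, Matrix.conjTranspose_one]
  refine ⟨X, Y - X ⊗ₖ 1, hX, ?_, hY.sub hP, ?_, (add_sub_cancel _ _).symm⟩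
  · rw [Matrix.trace_smul, Matrix.trace_traceRight, hY₀, smul_zero]
  · rw [map_sub, Matrix.traceRight_kronecker, Matrix.trace_one, Nat.cast_smul_eq_nsmul,
      ← Nat.cast_smul_eq_nsmul ℝ, smul_inv_smul₀ (by simp), sub_self]

lemma frobNorm_krausMap_kronecker_one_le (hA₁ : IsBiKraus A₁) (hA₂ : ∑ j, A₂ j * (A₂ j)ᴴ = 1)
    {X : Matrix n₁ n₁ ℂ} (hX : X.IsHermitian) (hX₀ : X.trace = 0) :
    frobNorm (krausMap (fun p : l₁ × l₂ => A₁ p.1 ⊗ₖ A₂ p.2) (X ⊗ₖ 1)) ≤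
      normOnOrthogonal (krausMap A₁) 1 * frobNorm (X ⊗ₖ (1 : Matrix n₂ n₂ ℂ)) := by
  rw [krausMap_kronecker, krausMap_one hA₂, frobNorm_kronecker, frobNorm_kronecker, ← mul_assoc]
  refine mul_le_mul_of_nonneg_right ?_ (frobNorm_nonneg _)
  exact frobNorm_apply_le_normOnOrthogonal_mul (frobNorm_krausMap_le hA₁) 1 hX
    (by rw [Matrix.one_mul, hX₀, Complex.zero_re])

lemma frobNorm_krausMap_kronecker_le_of_traceRight_eq_zero (hA₁ : IsBiKraus A₁)
    (hA₂ : IsBiKraus A₂) {Q : Matrix (n₁ × n₂) (n₁ × n₂) ℂ} (hQ : Matrix.traceRight Q = 0) :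
    frobNorm (krausMap (fun p : l₁ × l₂ => A₁ p.1 ⊗ₖ A₂ p.2) Q) ≤
      normOnOrthogonal (krausMap A₂) 1 * frobNorm Q := by
  have hS := normOnOrthogonal_nonneg (frobNorm_krausMap_le hA₂) 1
  rw [krausMap_kronecker_eq_comp]
  refine (frobNorm_krausMap_le hA₁.kronecker_one _).trans ?_
  rw [← sq_le_sq₀ (frobNorm_nonneg _) (mul_nonneg hS (frobNorm_nonneg _)), mul_pow,
    frobNorm_sq_eq_sum_blocks, frobNorm_sq_eq_sum_blocks, Finset.mul_sum]
  refine Finset.sum_le_sum fun a _ => ?_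
  rw [Finset.mul_sum]
  refine Finset.sum_le_sum fun b _ => ?_
  have hblock : (Matrix.blocks Q a b).trace = 0 := by
    rw [← Matrix.traceRight_apply, hQ, Matrix.zero_apply]
  rw [blocks_krausMap_one_kronecker, ← mul_pow]
  exact pow_le_pow_left₀ (frobNorm_nonneg _)
    (frobNorm_krausMap_le_of_trace_eq_zero hA₂ hblock) 2

lemma normOnOrthogonal_kronecker_le_max [Nonempty n₂] (hA₁ : IsBiKraus A₁)
    (hA₂ : IsBiKraus A₂) :
    normOnOrthogonal (krausMap fun p : l₁ × l₂ => A₁ p.1 ⊗ₖ A₂ p.2) 1 ≤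
      max (normOnOrthogonal (krausMap A₁) 1) (normOnOrthogonal (krausMap A₂) 1) := by
  set S₁ := normOnOrthogonal (krausMap A₁) 1
  set S₂ := normOnOrthogonal (krausMap A₂) 1
  have hS₁ : 0 ≤ S₁ := normOnOrthogonal_nonneg (frobNorm_krausMap_le hA₁) 1
  have hS₂ : 0 ≤ S₂ := normOnOrthogonal_nonneg (frobNorm_krausMap_le hA₂) 1
  refine csSup_le ⟨0, 0, Matrix.isHermitian_zero, by simp [frobNorm_zero], by simp,
    by simp [frobNorm_zero]⟩ ?_
  rintro _ ⟨Y, hY, hY₁, hY₀, rfl⟩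
  rw [Matrix.one_mul] at hY₀
  obtain ⟨X, Q, hX, hX₀, -, hQ, rfl⟩ := exists_eq_kronecker_one_add hY
    (hY.trace_eq_zero_of_re hY₀)
  have hτP : krausMap (fun p : l₁ × l₂ => A₁ p.1 ⊗ₖ A₂ p.2) (X ⊗ₖ 1) = krausMap A₁ X ⊗ₖ 1 := by
    rw [krausMap_kronecker, krausMap_one hA₂.sum_mul_conjTranspose]
  have hτQ : Matrix.traceRight (krausMap (fun p : l₁ × l₂ => A₁ p.1 ⊗ₖ A₂ p.2) Q) = 0 := by
    rw [traceRight_krausMap_kronecker A₁ hA₂.sum_conjTranspose_mul, hQ, map_zero]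
  have hP := frobNorm_krausMap_kronecker_one_le hA₁ hA₂.sum_mul_conjTranspose hX hX₀
  have hQ' := frobNorm_krausMap_kronecker_le_of_traceRight_eq_zero hA₁ hA₂ hQ
  have hY₂ : frobNorm (X ⊗ₖ 1 + Q) ^ 2 ≤ 1 := by
    nlinarith [frobNorm_nonneg (X ⊗ₖ (1 : Matrix n₂ n₂ ℂ) + Q)]
  rw [← sq_le_sq₀ (frobNorm_nonneg _) (hS₁.trans (le_max_left _ _)), map_add, hτP,
    frobNorm_kronecker_one_add_sq _ hτQ, ← hτP]
  calc _ ≤ (S₁ * frobNorm (X ⊗ₖ (1 : Matrix n₂ n₂ ℂ))) ^ 2 + (S₂ * frobNorm Q) ^ 2 :=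
        add_le_add (pow_le_pow_left₀ (frobNorm_nonneg _) hP 2)
          (pow_le_pow_left₀ (frobNorm_nonneg _) hQ' 2)
    _ ≤ max S₁ S₂ ^ 2 * frobNorm (X ⊗ₖ 1 + Q) ^ 2 := by
        rw [frobNorm_kronecker_one_add_sq _ hQ, mul_pow, mul_pow, mul_add]
        gcongr
        exacts [le_max_left _ _, le_max_right _ _]
    _ ≤ max S₁ S₂ ^ 2 := mul_le_of_le_one_right (sq_nonneg _) hY₂

end TensorBounds

section TensorLower

variable {n₁ n₂ l₁ l₂ : Type*} [Fintype n₁] [Fintype n₂] [Fintype l₁] [Fintype l₂]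
  [DecidableEq n₁] [DecidableEq n₂] {A₁ : l₁ → Matrix n₁ n₁ ℂ} {A₂ : l₂ → Matrix n₂ n₂ ℂ}

lemma normOnOrthogonal_le_kronecker_left [Nonempty n₂] (hA₁ : IsBiKraus A₁)
    (hA₂ : IsBiKraus A₂) :
    normOnOrthogonal (krausMap A₁) 1 ≤
      normOnOrthogonal (krausMap fun p : l₁ × l₂ => A₁ p.1 ⊗ₖ A₂ p.2) 1 :=
  normOnOrthogonal_one_le_of_intertwine _ (frobNorm_krausMap_le (hA₁.kronecker hA₂))
    (· ⊗ₖ (1 : Matrix n₂ n₂ ℂ)) (frobNorm_pos one_ne_zero)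
    (fun X => by rw [frobNorm_kronecker, mul_comm])
    (fun X hX => by
      rw [Matrix.IsHermitian, Matrix.conjTranspose_kronecker, hX.eq, Matrix.conjTranspose_one])
    (fun X hX => by rw [Matrix.trace_kronecker, hX, zero_mul])
    (fun X => by rw [krausMap_kronecker, krausMap_one hA₂.sum_mul_conjTranspose])

lemma normOnOrthogonal_le_kronecker_right [Nonempty n₁] (hA₁ : IsBiKraus A₁)
    (hA₂ : IsBiKraus A₂) :
    normOnOrthogonal (krausMap A₂) 1 ≤
      normOnOrthogonal (krausMap fun p : l₁ × l₂ => A₁ p.1 ⊗ₖ A₂ p.2) 1 :=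
  normOnOrthogonal_one_le_of_intertwine _ (frobNorm_krausMap_le (hA₁.kronecker hA₂))
    ((1 : Matrix n₁ n₁ ℂ) ⊗ₖ ·) (frobNorm_pos one_ne_zero)
    (fun X => frobNorm_kronecker _ _)
    (fun X hX => by
      rw [Matrix.IsHermitian, Matrix.conjTranspose_kronecker, hX.eq, Matrix.conjTranspose_one])
    (fun X hX => by rw [Matrix.trace_kronecker, hX, mul_zero])
    (fun X => by rw [krausMap_kronecker, krausMap_one hA₁.sum_mul_conjTranspose])

end TensorLower

/-- Let τ₁, τ₂ be bi-quantum channels.  Then the tensor product channel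
τ₁ ⊗ τ₂ (with Kraus operators the Kronecker products) is a bi-quantum channel, and
σ₂(τ₁ ⊗ τ₂) = max(σ₂(τ₁), σ₂(τ₂)). -/
theorem stmt_18 {n₁ n₂ l₁ l₂ : ℕ} (hn₁ : 0 < n₁) (hn₂ : 0 < n₂)
    (A₁ : Fin l₁ → Matrix (Fin n₁) (Fin n₁) ℂ)
    (A₂ : Fin l₂ → Matrix (Fin n₂) (Fin n₂) ℂ)
    (hA₁ : ∑ i, (A₁ i)ᴴ * A₁ i = 1) (hA₁' : ∑ i, A₁ i * (A₁ i)ᴴ = 1)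
    (hA₂ : ∑ i, (A₂ i)ᴴ * A₂ i = 1) (hA₂' : ∑ i, A₂ i * (A₂ i)ᴴ = 1) :
    (∑ i : Fin l₁ × Fin l₂, (A₁ i.1 ⊗ₖ A₂ i.2)ᴴ * (A₁ i.1 ⊗ₖ A₂ i.2) = 1) ∧
    (∑ i : Fin l₁ × Fin l₂, (A₁ i.1 ⊗ₖ A₂ i.2) * (A₁ i.1 ⊗ₖ A₂ i.2)ᴴ = 1) ∧
    sigma2 (fun X : Matrix (Fin n₁ × Fin n₂) (Fin n₁ × Fin n₂) ℂ =>
        ∑ i : Fin l₁ × Fin l₂, (A₁ i.1 ⊗ₖ A₂ i.2) * X * (A₁ i.1 ⊗ₖ A₂ i.2)ᴴ) =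
      max (sigma2 (fun X => ∑ i, A₁ i * X * (A₁ i)ᴴ))
        (sigma2 (fun X => ∑ i, A₂ i * X * (A₂ i)ᴴ)) := by
  have : Nonempty (Fin n₁) := Fin.pos_iff_nonempty.mp hn₁
  have : Nonempty (Fin n₂) := Fin.pos_iff_nonempty.mp hn₂
  have h₁ : IsBiKraus A₁ := ⟨hA₁, hA₁'⟩
  have h₂ : IsBiKraus A₂ := ⟨hA₂, hA₂'⟩
  have h := h₁.kronecker h₂
  refine ⟨h.sum_conjTranspose_mul, h.sum_mul_conjTranspose, ?_⟩
  change sigma2 (krausMap _) = max (sigma2 (krausMap A₁)) (sigma2 (krausMap A₂))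
  rw [sigma2_krausMap h, sigma2_krausMap h₁, sigma2_krausMap h₂]
  exact le_antisymm (normOnOrthogonal_kronecker_le_max h₁ h₂)
    (max_le (normOnOrthogonal_le_kronecker_left h₁ h₂) (normOnOrthogonal_le_kronecker_right h₁ h₂))
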